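/- Let f : ℝⁿ → ℝ be L-smooth with lower bound f⋆, and let x^{k+1} = x^k - (1/L)∇f(x^k) for k = 1,…,N. Then min_{1≤k≤N+1} ‖∇f(x^k)‖ ≤ ( 4L(f(x¹) - f⋆) / (3N + 2) )^{1/2}. -/

import Mathlib

/-!
A Lipschitz gradient gives the two-sided quadratic bound
`|f (y + d) - f y - ⟪∇f y, d⟫| ≤ L/2 ‖d‖²`. Applying its upper half at `y` and its lower half at
`y⁺ = y - ∇f y / L`, both towards the auxiliary point `y⁺ + ∇f y⁺ / (2L)`, shows that a gradient
step decreases `f` by at least `‖∇f y‖² / (2L) + ‖∇f y⁺‖² / (4L)`. Summing over the `N` steps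
and one more virtual step from `x (N + 1)`, whose value is still at least `f⋆`, the squared
gradient norms at `x 1, …, x (N + 1)` enter with weights adding up to `(3N + 2) / (4L)`.
-/

open scoped RealInnerProductSpace

section LipschitzGradient

variable {E : Type*} [NormedAddCommGroup E] [InnerProductSpace ℝ E] [CompleteSpace E]
  {f : E → ℝ} {L : ℝ}

theorem abs_sub_sub_inner_gradient_le (hf : Differentiable ℝ f)
    (hlip : ∀ x y, ‖gradient f x - gradient f y‖ ≤ L * ‖x - y‖) (y d : E) :
    |f (y + d) - f y - ⟪gradient f y, d⟫| ≤ L / 2 * ‖d‖ ^ 2 := by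
  have hderiv : ∀ t : ℝ, HasDerivAt (fun t : ℝ => f (y + t • d) - f y - t * ⟪gradient f y, d⟫)
      (⟪gradient f (y + t • d) - gradient f y, d⟫) t := by
    intro t
    have hline : HasDerivAt (fun t : ℝ => y + t • d) d t := by
      simpa using ((hasDerivAt_id t).smul_const d).const_add y
    have hcomp := (hf (y + t • d)).hasGradientAt.hasFDerivAt.comp_hasDerivAt t hline
    exact ((hcomp.sub_const (f y)).sub ((hasDerivAt_id t).mul_const ⟪gradient f y, d⟫)).congr_deriv
      (by simp [inner_sub_left])
  have hbound : ∀ t ∈ Set.Ico (0 : ℝ) 1,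
      ‖⟪gradient f (y + t • d) - gradient f y, d⟫‖ ≤ L * t * ‖d‖ ^ 2 := fun t ht =>
    calc ‖⟪gradient f (y + t • d) - gradient f y, d⟫‖
        ≤ ‖gradient f (y + t • d) - gradient f y‖ * ‖d‖ := norm_inner_le_norm _ _
      _ ≤ L * ‖y + t • d - y‖ * ‖d‖ := by gcongr; exact hlip _ _
      _ = L * t * ‖d‖ ^ 2 := by simp [norm_smul, abs_of_nonneg ht.1]; ring
  have := image_norm_le_of_norm_deriv_right_le_deriv_boundary
    (fun t _ => (hderiv t).continuousAt.continuousWithinAt)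
    (fun t _ => (hderiv t).hasDerivWithinAt) (B := fun t => L / 2 * t ^ 2 * ‖d‖ ^ 2)
    (by simp) (fun t => ?_) hbound (Set.right_mem_Icc.2 zero_le_one)
  · simpa using this
  · exact (((hasDerivAt_pow 2 t).const_mul (L / 2)).mul_const (‖d‖ ^ 2)).congr_deriv
      (by push_cast; ring)

theorem apply_sub_gradient_le (hL : 0 < L) (hf : Differentiable ℝ f)
    (hlip : ∀ x y, ‖gradient f x - gradient f y‖ ≤ L * ‖x - y‖) (y : E) :
    f (y - (1 / L) • gradient f y) ≤ f y - 1 / (2 * L) * ‖gradient f y‖ ^ 2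
      - 1 / (4 * L) * ‖gradient f (y - (1 / L) • gradient f y)‖ ^ 2 := by
  set p := y - (1 / L) • gradient f y
  have hup := (abs_le.1 (abs_sub_sub_inner_gradient_le hf hlip y
    (-(1 / L) • gradient f y + (1 / (2 * L)) • gradient f p))).2
  have hdown := (abs_le.1 (abs_sub_sub_inner_gradient_le hf hlip p
    ((1 / (2 * L)) • gradient f p))).1
  rw [show y + (-(1 / L) • gradient f y + (1 / (2 * L)) • gradient f p)
    = p + (1 / (2 * L)) • gradient f p by module] at hup
  simp only [inner_add_right, real_inner_smul_right, real_inner_self_eq_norm_sq, norm_add_sq_real,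
    norm_smul, real_inner_smul_left, mul_pow, Real.norm_eq_abs, sq_abs] at hup hdown
  field_simp at hup hdown ⊢
  linarith

theorem apply_gradient_iterate_le (hL : 0 < L) (hf : Differentiable ℝ f)
    (hlip : ∀ x y, ‖gradient f x - gradient f y‖ ≤ L * ‖x - y‖) {N : ℕ} {x : ℕ → E}
    (hupd : ∀ k, 1 ≤ k → k ≤ N → x (k + 1) = x k - (1 / L) • gradient f (x k)) {m : ℝ}
    (hm : ∀ k ∈ Finset.Icc 1 (N + 1), m ≤ ‖gradient f (x k)‖ ^ 2) :
    ∀ j ≤ N, f (x (j + 1)) ≤ f (x 1) - 3 / (4 * L) * j * m := by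
  intro j
  induction j with
  | zero => simp
  | succ j ih =>
    intro hj
    have hstep := apply_sub_gradient_le hL hf hlip (x (j + 1))
    rw [← hupd (j + 1) (by omega) (by omega)] at hstep
    have hcur : 1 / (2 * L) * m ≤ 1 / (2 * L) * ‖gradient f (x (j + 1))‖ ^ 2 := by
      gcongr; exact hm _ (Finset.mem_Icc.2 ⟨by omega, by omega⟩)
    have hnext : 1 / (4 * L) * m ≤ 1 / (4 * L) * ‖gradient f (x (j + 1 + 1))‖ ^ 2 := by
      gcongr; exact hm _ (Finset.mem_Icc.2 ⟨by omega, by omega⟩)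
    have hsplit : 3 / (4 * L) * ((j + 1 : ℕ) : ℝ) * m
        = 3 / (4 * L) * j * m + 1 / (2 * L) * m + 1 / (4 * L) * m := by
      field_simp; push_cast; ring
    linarith [ih (by omega)]

end LipschitzGradient

theorem stmt_8_general {n : ℕ} (f : EuclideanSpace ℝ (Fin n) → ℝ) (L : ℝ) (hL : 0 < L)
    (hf : Differentiable ℝ f)
    (hlip : ∀ x y, ‖gradient f x - gradient f y‖ ≤ L * ‖x - y‖)
    (fstar : ℝ) (hlow : ∀ y, fstar ≤ f y)
    (N : ℕ)
    (x : ℕ → EuclideanSpace ℝ (Fin n))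
    (hupd : ∀ k, 1 ≤ k → k ≤ N → x (k + 1) = x k - (1 / L) • gradient f (x k)) :
    ∃ k ∈ Finset.Icc 1 (N + 1),
      ‖gradient f (x k)‖ ≤ Real.sqrt (4 * L * (f (x 1) - fstar) / (3 * N + 2)) := by
  obtain ⟨k₀, hk₀, hmin⟩ :=
    (Finset.Icc 1 (N + 1)).exists_min_image (fun k => ‖gradient f (x k)‖) ⟨1, by simp⟩
  refine ⟨k₀, hk₀, Real.le_sqrt_of_sq_le ?_⟩
  set m := ‖gradient f (x k₀)‖ ^ 2
  have hm : ∀ k ∈ Finset.Icc 1 (N + 1), m ≤ ‖gradient f (x k)‖ ^ 2 := fun k hk =>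
    pow_le_pow_left₀ (norm_nonneg _) (hmin k hk) 2
  have hdescent := apply_gradient_iterate_le hL hf hlip hupd hm N le_rfl
  have hlast := apply_sub_gradient_le hL hf hlip (x (N + 1))
  have hlast_grad : 1 / (2 * L) * m ≤ 1 / (2 * L) * ‖gradient f (x (N + 1))‖ ^ 2 := by
    gcongr; exact hm _ (by simp)
  have hlast_next : 0 ≤ 1 / (4 * L) *
      ‖gradient f (x (N + 1) - (1 / L) • gradient f (x (N + 1)))‖ ^ 2 := by positivity
  have hbound : 3 / (4 * L) * N * m + 1 / (2 * L) * m ≤ f (x 1) - fstar := by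
    linarith [hlow (x (N + 1) - (1 / L) • gradient f (x (N + 1)))]
  rw [le_div_iff₀ (by positivity)]
  calc m * (3 * N + 2) = 4 * L * (3 / (4 * L) * N * m + 1 / (2 * L) * m) := by
        field_simp; ring
    _ ≤ 4 * L * (f (x 1) - fstar) := by gcongr

theorem stmt_8 {n : ℕ} (f : EuclideanSpace ℝ (Fin n) → ℝ) (L : ℝ) (hL : 0 < L)
    (hf : Differentiable ℝ f)
    (hlip : ∀ x y, ‖gradient f x - gradient f y‖ ≤ L * ‖x - y‖)
    (fstar : ℝ) (hlow : ∀ y, fstar ≤ f y)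
    (N : ℕ) (hN : 1 ≤ N)
    (x : ℕ → EuclideanSpace ℝ (Fin n))
    (hupd : ∀ k, 1 ≤ k → k ≤ N → x (k + 1) = x k - (1 / L) • gradient f (x k)) :
    ∃ k ∈ Finset.Icc 1 (N + 1),
      ‖gradient f (x k)‖ ≤ Real.sqrt (4 * L * (f (x 1) - fstar) / (3 * N + 2)) :=
  stmt_8_general f L hL hf hlip fstar hlow N x hupd
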